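/- Let ω be a uniformly random vector in {1, i, -1, -i}ⁿ and for a ∈ ℂⁿ let a∘ω denote the entrywise product. Define Λ(b)² = ‖Re(b)‖₂²·‖Im(b)‖₂² − ⟨Re(b), Im(b)⟩² for b ∈ ℂⁿ. Then 4·E_ω[Λ(a∘ω)²] = ‖a‖₂⁴ − ‖a‖₄⁴. -/

import Mathlib

/-- `Λ(b)²` for `b ∈ ℂⁿ`: `‖Re b‖₂²·‖Im b‖₂² − ⟨Re b, Im b⟩²`. -/
noncomputable def lamSq {n : ℕ} (b : Fin n → ℂ) : ℝ :=
  (∑ i, (b i).re ^ 2) * (∑ i, (b i).im ^ 2) - (∑ i, (b i).re * (b i).im) ^ 2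

/-!
For `b = a∘ω` one has `4 Λ(b)² = (∑ |b_j|²)² − |∑ b_j²|²`, with `|b_j| = |a_j|` and
`b_j² = ε_j a_j²`, where `ε_j = (-1)^{ω_j}` are independent uniform signs. Averaging
`|∑ ε_j a_j²|²` over `ω` kills the cross terms, since `E[ε_j ε_k] = δ_jk`, and leaves `∑ |a_j|⁴`.
-/

open Finset

section RandomSigns

variable {ι α : Type*} [Fintype ι] [DecidableEq ι] [Fintype α] {ε : α → ℝ}

theorem sum_apply_mul_apply_eq_zero (hε : ∑ t, ε t = 0) {j k : ι} (hjk : j ≠ k) :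
    ∑ ω : ι → α, ε (ω j) * ε (ω k) = 0 := by
  calc ∑ ω : ι → α, ε (ω j) * ε (ω k)
      = ∑ ω : ι → α, ∏ i, if i ∈ ({j, k} : Finset ι) then ε (ω i) else 1 := by
        simp only [prod_ite_mem, univ_inter, prod_pair hjk]
    _ = ∏ i, ∑ t, if i ∈ ({j, k} : Finset ι) then ε t else 1 := by
        rw [Fintype.prod_sum]
    _ = 0 := prod_eq_zero (mem_univ j) (by simp [hε])

theorem sum_apply_mul_self (hε : ∀ t, ε t ^ 2 = 1) (j : ι) :
    ∑ ω : ι → α, ε (ω j) * ε (ω j) = (Fintype.card α : ℝ) ^ Fintype.card ι := by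
  simp [← sq, hε]

variable {E : Type*} [NormedAddCommGroup E] [InnerProductSpace ℝ E]

theorem sum_norm_sum_smul_sq (hε : ∑ t, ε t = 0) (hε' : ∀ t, ε t ^ 2 = 1) (v : ι → E) :
    ∑ ω : ι → α, ‖∑ j, ε (ω j) • v j‖ ^ 2 =
      (Fintype.card α : ℝ) ^ Fintype.card ι * ∑ j, ‖v j‖ ^ 2 := by
  calc ∑ ω : ι → α, ‖∑ j, ε (ω j) • v j‖ ^ 2
      = ∑ ω : ι → α, ∑ j, ∑ k, ε (ω j) * ε (ω k) * inner ℝ (v j) (v k) := by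
        refine sum_congr rfl fun ω _ => ?_
        rw [← real_inner_self_eq_norm_sq, sum_inner]
        simp only [inner_sum, real_inner_smul_left, real_inner_smul_right]
        exact sum_congr rfl fun j _ => sum_congr rfl fun k _ => by ring
    _ = ∑ j, ∑ k, (∑ ω : ι → α, ε (ω j) * ε (ω k)) * inner ℝ (v j) (v k) := by
        simp only [sum_mul]
        rw [sum_comm]
        exact sum_congr rfl fun j _ => sum_comm
    _ = ∑ j, (Fintype.card α : ℝ) ^ Fintype.card ι * ‖v j‖ ^ 2 := by
        refine sum_congr rfl fun j _ => ?_
        rw [sum_eq_single j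
            (fun k _ hkj => by rw [sum_apply_mul_apply_eq_zero hε hkj.symm, zero_mul])
            (by simp),
          sum_apply_mul_self hε', real_inner_self_eq_norm_sq]
    _ = _ := (mul_sum _ _ _).symm

end RandomSigns

theorem neg_one_pow_sq {R : Type*} [Monoid R] [HasDistribNeg R] (m : ℕ) :
    ((-1 : R) ^ m) ^ 2 = 1 := by
  rw [← pow_mul, pow_mul', neg_one_sq, one_pow]

theorem sum_neg_one_pow_val_zmod_four : ∑ t : ZMod 4, (-1 : ℝ) ^ t.val = 0 := by
  change ∑ t : Fin 4, (-1 : ℝ) ^ t.val = 0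
  norm_num [Fin.sum_univ_four]

theorem four_mul_lamSq {n : ℕ} (b : Fin n → ℂ) :
    4 * lamSq b = (∑ j, ‖b j‖ ^ 2) ^ 2 - ‖∑ j, b j ^ 2‖ ^ 2 := by
  have hre : (∑ j, b j ^ 2).re = ∑ j, (b j).re ^ 2 - ∑ j, (b j).im ^ 2 := by
    simp only [Complex.re_sum, sq, Complex.mul_re, sum_sub_distrib]
  have him : (∑ j, b j ^ 2).im = 2 * ∑ j, (b j).re * (b j).im := by
    simp only [Complex.im_sum, sq, Complex.mul_im, mul_sum]
    exact sum_congr rfl fun j _ => by ring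
  have hnorm : ∑ j, ‖b j‖ ^ 2 = ∑ j, (b j).re ^ 2 + ∑ j, (b j).im ^ 2 := by
    simp only [Complex.sq_norm, Complex.normSq_apply, ← sq, sum_add_distrib]
  rw [hnorm, Complex.sq_norm, Complex.normSq_apply, hre, him, lamSq]
  ring

theorem norm_mul_I_pow (z : ℂ) (m : ℕ) : ‖z * Complex.I ^ m‖ = ‖z‖ := by
  simp

theorem mul_I_pow_sq (z : ℂ) (m : ℕ) : (z * Complex.I ^ m) ^ 2 = (-1 : ℝ) ^ m • z ^ 2 := by
  rw [Complex.real_smul, mul_pow, ← pow_mul, pow_mul', Complex.I_sq]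
  push_cast
  ring

/-- For `ω` uniform on `{1,i,-1,-i}ⁿ` (modelled as `ω : Fin n → ZMod 4`, entries `i^(ω j)`),
`4·E_ω[Λ(a∘ω)²] = ‖a‖₂⁴ − ‖a‖₄⁴`. -/
theorem stmt3 {n : ℕ} (a : Fin n → ℂ) :
    4 * ((∑ ω : Fin n → ZMod 4,
        lamSq (fun j => a j * Complex.I ^ ((ω j).val))) / 4 ^ n) =
      (∑ j, ‖a j‖ ^ 2) ^ 2 - ∑ j, ‖a j‖ ^ 4 := by
  have hsum : ∑ ω : Fin n → ZMod 4, 4 * lamSq (fun j => a j * Complex.I ^ ((ω j).val)) =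
      4 ^ n * ((∑ j, ‖a j‖ ^ 2) ^ 2 - ∑ j, ‖a j‖ ^ 4) := by
    simp only [four_mul_lamSq, norm_mul_I_pow, mul_I_pow_sq]
    rw [sum_sub_distrib, sum_norm_sum_smul_sq sum_neg_one_pow_val_zmod_four
      fun t => neg_one_pow_sq t.val]
    simp only [sum_const, card_univ, Fintype.card_fun, ZMod.card, Fintype.card_fin, norm_pow,
      nsmul_eq_mul, ← pow_mul]
    push_cast
    ring
  rw [mul_div_assoc', mul_sum, hsum]
  field_simp
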